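/- Fix an integer i with 1 ≤ i ≤ d−1, and define D_i : M_d(ℂ) → M_{d−1}(ℂ) by D_i(Y) = ∑_{m=0}^{d−1} E_m Y E_m†, where E_m = |m⟩⟨m| for 0 ≤ m ≤ d−2 and E_{d−1} = |i−1⟩⟨d−1| (as (d−1)×d matrices). Then ∑_{m=0}^{d−1} E_m†E_m = I_d (so D_i is a quantum channel), and for every matrix X ∈ M_d(ℂ) with PXP = X, where P = |0⟩⟨0| + |i⟩⟨i|, one has D_i(O(X)) = O^c(X). (Hence the sub-channel of O obtained by restricting the input to span{|0⟩,|i⟩} is degradable, with degrading map D_i.) -/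

import Mathlib

open Matrix ComplexOrder

/-- Von Neumann entropy (base-2) of a matrix: −∑ λᵢ log₂ λᵢ over its eigenvalues
(0 if the matrix is not Hermitian). -/
noncomputable def vnEntropy {n : ℕ} (ρ : Matrix (Fin n) (Fin n) ℂ) : ℝ :=
  if h : ρ.IsHermitian then -∑ i, (h.eigenvalues i) * Real.logb 2 (h.eigenvalues i) else 0

/-- The basis ket |i⟩ of ℂ^d (zero if out of range). -/
noncomputable def bket (d i : ℕ) : Fin d → ℂ := fun p => if (p : ℕ) = i then 1 else 0

/-- The projector |i⟩⟨i| on ℂ^d. -/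
noncomputable def bproj (d i : ℕ) : Matrix (Fin d) (Fin d) ℂ :=
  Matrix.vecMulVec (bket d i) (star (bket d i))

/-- Kraus operator K_k = μ_k|k⟩⟨0| + |d−1⟩⟨k+1| of the channel O. -/
noncomputable def KrO (d : ℕ) (μ : ℕ → ℝ) (k : ℕ) : Matrix (Fin d) (Fin d) ℂ :=
  ((μ k : ℝ) : ℂ) • Matrix.vecMulVec (bket d k) (star (bket d 0)) +
    Matrix.vecMulVec (bket d (d-1)) (star (bket d (k+1)))

/-- The channel O : M_d(ℂ) → M_d(ℂ) with parameters μ₀,…,μ_{d−2}. -/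
noncomputable def chanO (d : ℕ) (μ : ℕ → ℝ) (X : Matrix (Fin d) (Fin d) ℂ) :
    Matrix (Fin d) (Fin d) ℂ :=
  ∑ k ∈ Finset.range (d - 1), KrO d μ k * X * (KrO d μ k)ᴴ

/-- Kraus operator L_j = μ_j|j⟩⟨0| of O^c, for 0 ≤ j ≤ d−2. -/
noncomputable def LrO (d : ℕ) (μ : ℕ → ℝ) (j : ℕ) : Matrix (Fin (d-1)) (Fin d) ℂ :=
  ((μ j : ℝ) : ℂ) • Matrix.vecMulVec (bket (d-1) j) (star (bket d 0))

/-- Kraus operator L_{d−1} = ∑_{i=1}^{d−1}|i−1⟩⟨i| of O^c. -/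
noncomputable def VrO (d : ℕ) : Matrix (Fin (d-1)) (Fin d) ℂ :=
  Matrix.of fun a b => if (b : ℕ) = (a : ℕ) + 1 then 1 else 0

/-- The complementary channel O^c : M_d(ℂ) → M_{d−1}(ℂ). -/
noncomputable def chanOc (d : ℕ) (μ : ℕ → ℝ) (X : Matrix (Fin d) (Fin d) ℂ) :
    Matrix (Fin (d-1)) (Fin (d-1)) ℂ :=
  (∑ j ∈ Finset.range (d - 1), LrO d μ j * X * (LrO d μ j)ᴴ) + VrO d * X * (VrO d)ᴴ

/-- Kraus operator E_m of the degrading map D_i: E_m = |m⟩⟨m| for 0 ≤ m ≤ d−2 and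
E_{d−1} = |i−1⟩⟨d−1| (as (d−1)×d matrices). -/
noncomputable def ErD (d i m : ℕ) : Matrix (Fin (d-1)) (Fin d) ℂ :=
  if m = d - 1 then Matrix.vecMulVec (bket (d-1) (i-1)) (star (bket d (d-1)))
  else Matrix.vecMulVec (bket (d-1) m) (star (bket d m))

/-- The map D_i(Y) = ∑_{m=0}^{d−1} E_m Y E_m†. -/
noncomputable def mapD (d i : ℕ) (Y : Matrix (Fin d) (Fin d) ℂ) :
    Matrix (Fin (d-1)) (Fin (d-1)) ℂ :=
  ∑ m ∈ Finset.range d, ErD d i m * Y * (ErD d i m)ᴴ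

/-!
Every Kraus operator of `D_i` is a matrix unit `|σ m⟩⟨m|` (with `σ (d-1) = i-1`), so `D_i(Y)`
only reads the diagonal of `Y`. On the diagonal, `O(X)` carries `μ_m² X₀₀` at `m < d-1` and
`∑_k X_{k+1,k+1}` at `d-1`, which is `X_{ii}` when `X = PXP`. The complementary channel gives the
same diagonal `μ_j² X₀₀` plus `V X V† = (VP) X (VP)† = X_{ii} |i-1⟩⟨i-1|`, because `VP = |i-1⟩⟨i|`.
-/

open Finset

section KetBra

variable {n : ℕ}

@[simp]
lemma star_bket (p : ℕ) : star (bket n p) = bket n p := by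
  ext a
  simp only [bket, Pi.star_apply]
  split_ifs <;> simp

lemma bket_coe (a : Fin n) : bket n a = Pi.single a 1 := by
  ext b
  simp [bket, Pi.single_apply, Fin.ext_iff]

lemma bket_eq_single {p : ℕ} (hp : p < n) : bket n p = Pi.single ⟨p, hp⟩ 1 :=
  bket_coe ⟨p, hp⟩

lemma bket_eq_zero {p : ℕ} (hp : n ≤ p) : bket n p = 0 := by
  ext a
  simp only [bket, Pi.zero_apply, ite_eq_right_iff]
  omega

lemma bket_dotProduct_self {p : ℕ} (hp : p < n) : bket n p ⬝ᵥ bket n p = 1 := by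
  rw [bket_eq_single hp, dotProduct_single_one, Pi.single_eq_same]

lemma bket_dotProduct_bket_of_ne {p q : ℕ} (h : p ≠ q) : bket n p ⬝ᵥ bket n q = 0 := by
  refine Finset.sum_eq_zero fun a _ => ?_
  simp only [bket]
  split_ifs <;> simp_all

end KetBra

section VecMulVec

variable {ι κ ν ρ : Type*} [Fintype κ] [Fintype ν]

lemma vecMulVec_mulVec_comm (u : ι → ℂ) (v w : κ → ℂ) :
    vecMulVec u v *ᵥ w = (v ⬝ᵥ w) • u := by
  rw [vecMulVec_mulVec, op_smul_eq_smul]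

lemma vecMulVec_mul_mul_vecMulVec (u : ι → ℂ) (v : κ → ℂ) (X : Matrix κ ν ℂ) (w : ν → ℂ)
    (z : ρ → ℂ) : vecMulVec u v * X * vecMulVec w z = (v ⬝ᵥ X *ᵥ w) • vecMulVec u z := by
  rw [vecMulVec_mul, vecMulVec_mul_vecMulVec, ← dotProduct_mulVec, vecMulVec_smul]

lemma star_dotProduct_mul_mul_conjTranspose_mulVec [Fintype ι] (v : ι → ℂ) (A : Matrix ι κ ℂ)
    (X : Matrix κ κ ℂ) :
    star v ⬝ᵥ (A * X * Aᴴ) *ᵥ v = star (Aᴴ *ᵥ v) ⬝ᵥ X *ᵥ (Aᴴ *ᵥ v) := by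
  rw [star_mulVec, conjTranspose_conjTranspose, ← mulVec_mulVec, ← mulVec_mulVec,
    dotProduct_mulVec]

end VecMulVec

lemma sum_range_bproj (d : ℕ) : ∑ m ∈ range d, bproj d m = 1 := by
  rw [Finset.sum_range (fun m => bproj d m)]
  simp only [bproj, star_bket]
  simp only [bket_coe, ← single_eq_single_vecMulVec_single, sum_single_one]

section Degrading

variable {d i m : ℕ}

def degradingIndex (d i m : ℕ) : ℕ := if m = d - 1 then i - 1 else m

lemma degradingIndex_lt (hm : m < d) (hi : i - 1 < d - 1) : degradingIndex d i m < d - 1 := by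
  unfold degradingIndex
  split_ifs <;> omega

lemma ErD_eq : ErD d i m = vecMulVec (bket (d - 1) (degradingIndex d i m)) (bket d m) := by
  unfold ErD degradingIndex
  split_ifs with h <;> simp [h]

lemma conjTranspose_ErD_mul_ErD (hm : m < d) (hi : i - 1 < d - 1) :
    (ErD d i m)ᴴ * ErD d i m = bproj d m := by
  rw [ErD_eq, conjTranspose_vecMulVec, star_bket, star_bket, vecMulVec_mul_vecMulVec,
    bket_dotProduct_self (degradingIndex_lt hm hi), one_smul, bproj, star_bket]

lemma sum_conjTranspose_ErD_mul_ErD (hi : i - 1 < d - 1) :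
    ∑ m ∈ range d, (ErD d i m)ᴴ * ErD d i m = 1 := by
  rw [sum_congr rfl fun m hm => conjTranspose_ErD_mul_ErD (mem_range.1 hm) hi, sum_range_bproj]

lemma ErD_mul_mul_conjTranspose (Y : Matrix (Fin d) (Fin d) ℂ) :
    ErD d i m * Y * (ErD d i m)ᴴ = (bket d m ⬝ᵥ Y *ᵥ bket d m) •
      vecMulVec (bket (d - 1) (degradingIndex d i m)) (bket (d - 1) (degradingIndex d i m)) := by
  rw [ErD_eq, conjTranspose_vecMulVec, star_bket, star_bket, vecMulVec_mul_mul_vecMulVec]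

lemma mapD_eq (hd : 0 < d) (Y : Matrix (Fin d) (Fin d) ℂ) :
    mapD d i Y = ∑ m ∈ range (d - 1),
        (bket d m ⬝ᵥ Y *ᵥ bket d m) • vecMulVec (bket (d - 1) m) (bket (d - 1) m) +
      (bket d (d - 1) ⬝ᵥ Y *ᵥ bket d (d - 1)) •
        vecMulVec (bket (d - 1) (i - 1)) (bket (d - 1) (i - 1)) := by
  rw [mapD, show range d = range (d - 1 + 1) by rw [Nat.sub_add_cancel hd], sum_range_succ]
  simp only [ErD_mul_mul_conjTranspose, degradingIndex, ↓reduceIte]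
  congr 1
  refine sum_congr rfl fun m hm => ?_
  rw [if_neg (mem_range.1 hm).ne]

end Degrading

section Channel

variable {d k c : ℕ} {μ : ℕ → ℝ}

lemma conjTranspose_KrO :
    (KrO d μ k)ᴴ = (μ k : ℂ) • vecMulVec (bket d 0) (bket d k) +
      vecMulVec (bket d (k + 1)) (bket d (d - 1)) := by
  simp [KrO, conjTranspose_smul]

lemma conjTranspose_KrO_mulVec_bket_of_lt (hc : c < d - 1) :
    (KrO d μ k)ᴴ *ᵥ bket d c = if k = c then (μ k : ℂ) • bket d 0 else 0 := by
  rw [conjTranspose_KrO, add_mulVec, smul_mulVec, vecMulVec_mulVec_comm,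
    vecMulVec_mulVec_comm, bket_dotProduct_bket_of_ne (p := d - 1) (by omega), zero_smul,
    add_zero]
  split_ifs with h
  · rw [h, bket_dotProduct_self (by omega), one_smul]
  · rw [bket_dotProduct_bket_of_ne h, zero_smul, smul_zero]

lemma conjTranspose_KrO_mulVec_bket_last (hk : k < d - 1) :
    (KrO d μ k)ᴴ *ᵥ bket d (d - 1) = bket d (k + 1) := by
  rw [conjTranspose_KrO, add_mulVec, smul_mulVec, vecMulVec_mulVec_comm,
    vecMulVec_mulVec_comm, bket_dotProduct_bket_of_ne hk.ne, bket_dotProduct_self (by omega),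
    zero_smul, smul_zero, one_smul, zero_add]

lemma bket_dotProduct_KrO_sandwich (X : Matrix (Fin d) (Fin d) ℂ) :
    bket d c ⬝ᵥ (KrO d μ k * X * (KrO d μ k)ᴴ) *ᵥ bket d c =
      star ((KrO d μ k)ᴴ *ᵥ bket d c) ⬝ᵥ X *ᵥ ((KrO d μ k)ᴴ *ᵥ bket d c) := by
  simpa using star_dotProduct_mul_mul_conjTranspose_mulVec (bket d c) (KrO d μ k) X

lemma bket_dotProduct_chanO_mulVec_bket_of_lt (hc : c < d - 1) (X : Matrix (Fin d) (Fin d) ℂ) :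
    bket d c ⬝ᵥ chanO d μ X *ᵥ bket d c = (μ c : ℂ) ^ 2 * (bket d 0 ⬝ᵥ X *ᵥ bket d 0) := by
  simp only [chanO, sum_mulVec, dotProduct_sum, bket_dotProduct_KrO_sandwich,
    conjTranspose_KrO_mulVec_bket_of_lt hc]
  rw [sum_eq_single c]
  · rw [if_pos rfl, star_smul, star_bket, Complex.star_def, Complex.conj_ofReal, mulVec_smul,
      dotProduct_smul, smul_dotProduct, smul_eq_mul, smul_eq_mul, ← mul_assoc, pow_two]
  · intro k _ hk
    rw [if_neg hk, star_zero, zero_dotProduct]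
  · intro h
    exact absurd (mem_range.2 hc) h

lemma bket_dotProduct_chanO_mulVec_bket_last (X : Matrix (Fin d) (Fin d) ℂ) :
    bket d (d - 1) ⬝ᵥ chanO d μ X *ᵥ bket d (d - 1) =
      ∑ k ∈ range (d - 1), bket d (k + 1) ⬝ᵥ X *ᵥ bket d (k + 1) := by
  simp only [chanO, sum_mulVec, dotProduct_sum, bket_dotProduct_KrO_sandwich]
  refine sum_congr rfl fun k hk => ?_
  rw [conjTranspose_KrO_mulVec_bket_last (mem_range.1 hk), star_bket]

lemma chanOc_eq (X : Matrix (Fin d) (Fin d) ℂ) :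
    chanOc d μ X = ∑ j ∈ range (d - 1), ((μ j : ℂ) ^ 2 * (bket d 0 ⬝ᵥ X *ᵥ bket d 0)) •
        vecMulVec (bket (d - 1) j) (bket (d - 1) j) + VrO d * X * (VrO d)ᴴ := by
  rw [chanOc]
  congr 1
  refine sum_congr rfl fun j _ => ?_
  rw [LrO, conjTranspose_smul, conjTranspose_vecMulVec, star_star, star_bket, Complex.star_def,
    Complex.conj_ofReal, Matrix.smul_mul, Matrix.smul_mul, Matrix.mul_smul, smul_smul,
    vecMulVec_mul_mul_vecMulVec, smul_smul, star_bket]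
  ring_nf

end Channel

section Support

variable {d i : ℕ} {X : Matrix (Fin d) (Fin d) ℂ}

lemma conjTranspose_bproj (p : ℕ) : (bproj d p)ᴴ = bproj d p := by
  simp [bproj]

lemma mulVec_bket_eq_zero_of_support
    (hX : (bproj d 0 + bproj d i) * X * (bproj d 0 + bproj d i) = X) {q : ℕ} (h0 : q ≠ 0)
    (hi : q ≠ i) : X *ᵥ bket d q = 0 := by
  rw [← hX, ← mulVec_mulVec, bproj, bproj, add_mulVec, star_bket, star_bket,
    vecMulVec_mulVec_comm, vecMulVec_mulVec_comm, bket_dotProduct_bket_of_ne h0.symm,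
    bket_dotProduct_bket_of_ne (Ne.symm hi), zero_smul, zero_smul, add_zero, mulVec_zero]

lemma sum_bket_succ_dotProduct_eq_of_support (hi1 : 1 ≤ i) (hi2 : i ≤ d - 1)
    (hX : (bproj d 0 + bproj d i) * X * (bproj d 0 + bproj d i) = X) :
    ∑ k ∈ range (d - 1), bket d (k + 1) ⬝ᵥ X *ᵥ bket d (k + 1) = bket d i ⬝ᵥ X *ᵥ bket d i := by
  rw [sum_eq_single (i - 1), Nat.sub_add_cancel hi1]
  · intro k _ hk
    rw [mulVec_bket_eq_zero_of_support hX (Nat.succ_ne_zero k) (by omega), dotProduct_zero]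
  · intro h
    exact absurd (mem_range.2 (by omega)) h

lemma VrO_mulVec_bket {p : ℕ} (hp : 1 ≤ p) : VrO d *ᵥ bket d p = bket (d - 1) (p - 1) := by
  rcases lt_or_ge p d with hpd | hpd
  · ext a
    rw [bket_eq_single hpd, mulVec_single_one]
    simp only [col_apply, VrO, of_apply, bket]
    congr 1
    simp only [eq_iff_iff]
    omega
  · rw [bket_eq_zero hpd, bket_eq_zero (by omega), mulVec_zero]

lemma VrO_mulVec_bket_zero : VrO d *ᵥ bket d 0 = 0 := by
  ext a
  rw [mulVec, dotProduct]
  refine sum_eq_zero fun b _ => ?_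
  simp only [VrO, of_apply, bket, mul_ite, mul_one, mul_zero, ite_eq_right_iff]
  omega

lemma VrO_mul_mul_conjTranspose_of_support (hi1 : 1 ≤ i)
    (hX : (bproj d 0 + bproj d i) * X * (bproj d 0 + bproj d i) = X) :
    VrO d * X * (VrO d)ᴴ =
      (bket d i ⬝ᵥ X *ᵥ bket d i) • vecMulVec (bket (d - 1) (i - 1)) (bket (d - 1) (i - 1)) := by
  have hVP : VrO d * (bproj d 0 + bproj d i) = vecMulVec (bket (d - 1) (i - 1)) (bket d i) := by
    rw [Matrix.mul_add, bproj, bproj, mul_vecMulVec, mul_vecMulVec, VrO_mulVec_bket_zero,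
      VrO_mulVec_bket hi1, zero_vecMulVec, zero_add, star_bket]
  have hPh : (bproj d 0 + bproj d i)ᴴ = bproj d 0 + bproj d i := by
    rw [conjTranspose_add, conjTranspose_bproj, conjTranspose_bproj]
  calc VrO d * X * (VrO d)ᴴ
      = (VrO d * (bproj d 0 + bproj d i)) * X * (VrO d * (bproj d 0 + bproj d i))ᴴ := by
        rw [conjTranspose_mul, hPh]
        conv_lhs => rw [← hX]
        simp only [Matrix.mul_assoc]
    _ = _ := by
        rw [hVP, conjTranspose_vecMulVec, star_bket, star_bket, vecMulVec_mul_mul_vecMulVec]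

end Support

theorem stmt15 (d : ℕ) (μ : ℕ → ℝ)
    (i : ℕ) (hi1 : 1 ≤ i) (hi2 : i ≤ d - 1) :
    (∑ m ∈ Finset.range d, (ErD d i m)ᴴ * ErD d i m) = (1 : Matrix (Fin d) (Fin d) ℂ) ∧
    ∀ X : Matrix (Fin d) (Fin d) ℂ,
      (bproj d 0 + bproj d i) * X * (bproj d 0 + bproj d i) = X →
      mapD d i (chanO d μ X) = chanOc d μ X := by
  refine ⟨sum_conjTranspose_ErD_mul_ErD (by omega), fun X hX => ?_⟩
  rw [mapD_eq (by omega), chanOc_eq, VrO_mul_mul_conjTranspose_of_support hi1 hX,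
    bket_dotProduct_chanO_mulVec_bket_last, sum_bket_succ_dotProduct_eq_of_support hi1 hi2 hX]
  congr 1
  refine sum_congr rfl fun m hm => ?_
  rw [bket_dotProduct_chanO_mulVec_bket_of_lt (mem_range.1 hm)]
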